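/- arXiv:1210.5683 — 6 statements merged into one kernel-verified Lean document; each statement's English description precedes it below -/
import Mathlib

section
/- Let r and k be even integers with 1 ≤ k ≤ r. Then every r-regular graph has a k-factor, i.e., a spanning subgraph in which every vertex has degree exactly k. -/
noncomputable def ndeg {V : Type*} (F : SimpleGraph V) (v : V) : ℕ :=
  (F.neighborSet v).ncard

/-!
Write `r = 2s` and `k = 2m`. A graph whose degrees are all even has an Eulerian orientation,
one in which every vertex has as many out-neighbours as in-neighbours: a cycle exists as soon as
there is an edge (otherwise, all degrees being even, every path could be prolonged at its start
forever), it can be oriented cyclically, and the remaining edges are handled by induction. For an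
`r`-regular graph every out- and in-degree is then `s`, so the orientation is an `s`-regular
bipartite relation; by Hall's theorem it contains a perfect matching, and removing `s - m`
matchings leaves an `m`-regular sub-relation. Forgetting directions, that sub-relation is a
`2m`-factor.
-/

theorem exists_injective_of_regular {α : Type*} [Finite α] {R : α → α → Prop} {d : ℕ}
    (hd : 0 < d) (hout : ∀ a, {b | R a b}.ncard = d) (hin : ∀ b, {a | R a b}.ncard = d) :
    ∃ f : α → α, Function.Injective f ∧ ∀ a, R a (f a) := by
  classical
  have := Fintype.ofFinite α
  rw [← Fintype.all_card_le_filter_rel_iff_exists_injective]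
  intro A
  refine Nat.le_of_mul_le_mul_right
    (Finset.card_mul_le_card_mul R (fun a ha => ?_) fun b _ => ?_) hd
  · rw [← hout a, ← Set.ncard_coe_finset]
    exact Set.ncard_le_ncard fun b hb => by simpa [Finset.bipartiteAbove] using ⟨⟨a, ha, hb⟩, hb⟩
  · rw [← hin b, ← Set.ncard_coe_finset]
    exact Set.ncard_le_ncard fun a ha => by simp_all [Finset.bipartiteBelow]

theorem exists_regular_le_of_regular {α : Type*} [Finite α] {R : α → α → Prop} {d m : ℕ}
    (hm : m ≤ d) (hout : ∀ a, {b | R a b}.ncard = d) (hin : ∀ b, {a | R a b}.ncard = d) :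
    ∃ T ≤ R, (∀ a, {b | T a b}.ncard = m) ∧ ∀ b, {a | T a b}.ncard = m := by
  induction d generalizing R with
  | zero => exact ⟨R, le_rfl, Nat.le_zero.1 hm ▸ hout, Nat.le_zero.1 hm ▸ hin⟩
  | succ d ih =>
    rcases hm.eq_or_lt with rfl | hm
    · exact ⟨R, le_rfl, hout, hin⟩
    obtain ⟨f, hf, hRf⟩ := exists_injective_of_regular d.succ_pos hout hin
    have hout' : ∀ a, {b | R a b ∧ b ≠ f a}.ncard = d := fun a => by
      have : {b | R a b ∧ b ≠ f a} = {b | R a b} \ {f a} := by ext; simp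
      rw [this, Set.ncard_sdiff_singleton_of_mem (s := {b | R a b}) (hRf a), hout,
        Nat.add_sub_cancel]
    have hin' : ∀ b, {a | R a b ∧ b ≠ f a}.ncard = d := by
      refine (Finite.surjective_of_injective hf).forall.2 fun a₀ => ?_
      have : {a | R a (f a₀) ∧ f a₀ ≠ f a} = {a | R a (f a₀)} \ {a₀} := by
        ext; simp [hf.ne_iff, ne_comm]
      rw [this, Set.ncard_sdiff_singleton_of_mem (s := {a | R a (f a₀)}) (hRf a₀), hin,
        Nat.add_sub_cancel]
    obtain ⟨T, hT, hTout, hTin⟩ := ih (Nat.le_of_lt_succ hm) hout' hin'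
    exact ⟨T, fun a b h => (hT a b h).1, hTout, hTin⟩

namespace SimpleGraph

variable {V : Type*}

theorem ndeg_sup_of_disjoint [Finite V] {G₁ G₂ : SimpleGraph V} (h : Disjoint G₁ G₂) (x : V) :
    ndeg (G₁ ⊔ G₂) x = ndeg G₁ x + ndeg G₂ x := by
  refine Set.ncard_union_eq (Set.disjoint_left.2 fun y h₁ h₂ => ?_)
  exact (disjoint_iff_inf_le.1 h) ⟨h₁, h₂⟩

structure IsOrientation (G : SimpleGraph V) (D : V → V → Prop) : Prop where
  adj_iff : ∀ x y, G.Adj x y ↔ D x y ∨ D y x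
  asymm : ∀ x y, D x y → ¬ D y x

structure IsEulerianOrientation (G : SimpleGraph V) (D : V → V → Prop) : Prop
    extends G.IsOrientation D where
  ncard_out_eq_ncard_in : ∀ x, {y | D x y}.ncard = {y | D y x}.ncard

namespace IsOrientation

variable {G : SimpleGraph V} {D : V → V → Prop}

theorem ndeg_eq [Finite V] (hD : G.IsOrientation D) (x : V) :
    ndeg G x = {y | D x y}.ncard + {y | D y x}.ncard := by
  have : G.neighborSet x = {y | D x y} ∪ {y | D y x} := by ext y; exact hD.adj_iff x y
  rw [ndeg, this]
  exact Set.ncard_union_eq (s := {y | D x y}) (Set.disjoint_left.2 fun y => hD.asymm x y)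

theorem fromRel_of_le {T : V → V → Prop} (hD : G.IsOrientation D) (hT : T ≤ D) :
    (SimpleGraph.fromRel T).IsOrientation T where
  adj_iff x y := by
    refine ⟨fun h => h.2, fun h => ⟨?_, h⟩⟩
    rintro rfl
    rcases h with h | h <;> exact hD.asymm x x (hT x x h) (hT x x h)
  asymm x y h h' := hD.asymm x y (hT x y h) (hT y x h')

theorem fromRel_le {T : V → V → Prop} (hD : G.IsOrientation D) (hT : T ≤ D) :
    SimpleGraph.fromRel T ≤ G := fun x y h =>
  (hD.adj_iff x y).2 (h.2.imp (hT x y) (hT y x))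

end IsOrientation

namespace IsEulerianOrientation

variable {G : SimpleGraph V} {D : V → V → Prop}

theorem bot : (⊥ : SimpleGraph V).IsEulerianOrientation ⊥ where
  adj_iff _ _ := by simp
  asymm _ _ h := h.elim
  ncard_out_eq_ncard_in _ := rfl

theorem ndeg_eq_two_mul [Finite V] (hD : G.IsEulerianOrientation D) (x : V) :
    ndeg G x = 2 * {y | D x y}.ncard := by
  rw [hD.ndeg_eq, hD.ncard_out_eq_ncard_in, two_mul]

theorem sup [Finite V] {G' : SimpleGraph V} {D' : V → V → Prop} (hD : G.IsEulerianOrientation D)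
    (hD' : G'.IsEulerianOrientation D') (h : Disjoint G G') :
    (G ⊔ G').IsEulerianOrientation (D ⊔ D') := by
  have hGG' : ∀ x y, G.Adj x y → ¬ G'.Adj x y := fun x y h₁ h₂ => (disjoint_iff_inf_le.1 h) ⟨h₁, h₂⟩
  have hDD' : ∀ x y, D x y → ¬ D' x y ∧ ¬ D' y x := fun x y hxy => by
    have := hGG' x y ((hD.adj_iff x y).2 (.inl hxy))
    rw [hD'.adj_iff] at this
    tauto
  have hsplit : ∀ x, {y | (D ⊔ D') x y}.ncard = {y | D x y}.ncard + {y | D' x y}.ncard ∧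
      {y | (D ⊔ D') y x}.ncard = {y | D y x}.ncard + {y | D' y x}.ncard := fun x =>
    ⟨Set.ncard_union_eq (s := {y | D x y}) (Set.disjoint_left.2 fun y h₁ => (hDD' x y h₁).1),
      Set.ncard_union_eq (s := {y | D y x}) (Set.disjoint_left.2 fun y h₁ => (hDD' y x h₁).1)⟩
  refine ⟨⟨fun x y => ?_, fun x y => ?_⟩, fun x => ?_⟩
  · simp only [sup_adj, hD.adj_iff, hD'.adj_iff, Pi.sup_apply, sup_Prop_eq]
    tauto
  · have := hD.asymm x y
    have := hD'.asymm x y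
    have := hDD' x y
    have := hDD' y x
    simp only [Pi.sup_apply, sup_Prop_eq]
    tauto
  · rw [(hsplit x).1, (hsplit x).2, hD.ncard_out_eq_ncard_in, hD'.ncard_out_eq_ncard_in]

end IsEulerianOrientation

namespace Walk

variable {G : SimpleGraph V}

def dartRel {u v : V} (p : G.Walk u v) (x y : V) : Prop :=
  ∃ d ∈ p.darts, d.toProd = (x, y)

variable {u v : V} {x y : V}

theorem dartRel_reverse (p : G.Walk u v) : p.reverse.dartRel x y ↔ p.dartRel y x := by
  simp only [dartRel, darts_reverse, List.mem_reverse, List.mem_map, exists_exists_and_eq_and]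
  refine exists_congr fun d => and_congr_right fun _ => ?_
  rw [Dart.symm_toProd, Prod.swap_eq_iff_eq_swap, Prod.swap_prod_mk]

theorem toSubgraph_adj_iff_dartRel (p : G.Walk u v) :
    p.toSubgraph.Adj x y ↔ p.dartRel x y ∨ p.dartRel y x := by
  simp only [← Subgraph.mem_edgeSet, mem_edges_toSubgraph, edges, List.mem_map,
    dart_edge_eq_mk'_iff, dartRel]
  grind

theorem subsingleton_setOf_dartRel (p : G.Walk u v) (hp : p.support.tail.Nodup) (y : V) :
    {x | p.dartRel x y}.Subsingleton := fun x ⟨d, hd, hdxy⟩ x' ⟨d', hd', hdxy'⟩ => by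
  rw [← p.map_snd_darts] at hp
  obtain rfl : d = d' := List.inj_on_of_nodup_map hp hd hd' (by simp [hdxy, hdxy'])
  simp_all

theorem IsCycle.isEulerianOrientation_dartRel {c : G.Walk u u} (hc : c.IsCycle) :
    c.toSubgraph.spanningCoe.IsEulerianOrientation c.dartRel := by
  have hin : ∀ x, {y | c.dartRel y x}.Subsingleton := c.subsingleton_setOf_dartRel hc.support_nodup
  have hout : ∀ x, {y | c.dartRel x y}.Subsingleton := fun x => by
    simpa only [dartRel_reverse] using
      c.reverse.subsingleton_setOf_dartRel hc.reverse.support_nodup x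
  -- A vertex of the cycle has two cycle-neighbours but at most one predecessor and at most one
  -- successor, so it has exactly one of each and they differ.
  have key : ∀ x, {y | c.dartRel x y}.ncard = {y | c.dartRel y x}.ncard ∧
      Disjoint {y | c.dartRel x y} {y | c.dartRel y x} := fun x => by
    by_cases hx : x ∈ c.support
    · have h2 : ({y | c.dartRel x y} ∪ {y | c.dartRel y x}).ncard = 2 := by
        rw [← hc.ncard_neighborSet_toSubgraph_eq_two hx]
        congr 1
        ext y
        exact (toSubgraph_adj_iff_dartRel c).symm
      have := Set.ncard_union_add_ncard_inter _ _ (hout x).finite (hin x).finite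
      have := (Set.ncard_le_one (hout x).finite).2 (hout x)
      have := (Set.ncard_le_one (hin x).finite).2 (hin x)
      refine ⟨by omega, Set.disjoint_iff_inter_eq_empty.2 ?_⟩
      exact (Set.ncard_eq_zero ((hout x).finite.inter_of_left _)).1 (by omega)
    · have hempty : ∀ y, ¬ c.dartRel x y ∧ ¬ c.dartRel y x := fun y => by
        refine ⟨fun ⟨d, hd, hdxy⟩ => hx ?_, fun ⟨d, hd, hdyx⟩ => hx ?_⟩
        · simpa [hdxy] using c.dart_fst_mem_support_of_mem_darts hd
        · simpa [hdyx] using c.dart_snd_mem_support_of_mem_darts hd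
      simp [hempty]
  refine ⟨⟨fun x y => ?_, fun x y hxy hyx => ?_⟩, fun x => (key x).1⟩
  · exact toSubgraph_adj_iff_dartRel c
  · exact Set.disjoint_left.1 (key x).2 hxy hyx

end Walk

theorem IsAcyclic.exists_isPath_length_eq_succ [Finite V] {G : SimpleGraph V} (hG : G.IsAcyclic)
    (heven : ∀ x, Even (ndeg G x)) {x y : V} {p : G.Walk x y} (hp : p.IsPath) (hnil : ¬ p.Nil) :
    ∃ (z : V) (q : G.Walk z y), q.IsPath ∧ q.length = p.length + 1 := by
  have hpos : 0 < ndeg G x := (Set.ncard_pos (Set.toFinite _)).2 ⟨p.snd, p.adj_snd hnil⟩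
  obtain ⟨z, hxz, hz⟩ := Set.exists_ne_of_one_lt_ncard
    (show 1 < ndeg G x by obtain ⟨m, hm⟩ := heven x; omega) p.snd
  have hzp : z ∉ p.support := fun h => hz (hG.eq_snd_of_adj_start hp hxz h)
  exact ⟨z, .cons hxz.symm p, hp.cons hzp, rfl⟩

theorem not_isAcyclic_of_even_ndeg [Finite V] {G : SimpleGraph V} (heven : ∀ x, Even (ndeg G x))
    (hG : G ≠ ⊥) : ¬ G.IsAcyclic := by
  intro hacyc
  have hpaths : ∀ n, ∃ (x y : V) (p : G.Walk x y), p.IsPath ∧ p.length = n + 1 := by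
    intro n
    induction n with
    | zero =>
      obtain ⟨a, b, hab⟩ := ne_bot_iff_exists_adj.1 hG
      exact ⟨a, b, hab.toWalk, hab.isPath_toWalk, rfl⟩
    | succ n ih =>
      obtain ⟨x, y, p, hp, hlen⟩ := ih
      obtain ⟨z, q, hq, hqlen⟩ :=
        hacyc.exists_isPath_length_eq_succ heven hp (Walk.not_nil_iff_lt_length.2 (by omega))
      exact ⟨z, y, q, hq, by omega⟩
  have := Fintype.ofFinite V
  obtain ⟨x, y, p, hp, hlen⟩ := hpaths (Fintype.card V)
  exact absurd hp.length_lt (by omega)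

theorem exists_isEulerianOrientation [Finite V] (G : SimpleGraph V)
    (heven : ∀ x, Even (ndeg G x)) : ∃ D, G.IsEulerianOrientation D := by
  induction G using WellFoundedLT.induction with
  | _ G ih =>
  rcases eq_or_ne G ⊥ with rfl | hG
  · exact ⟨⊥, .bot⟩
  obtain ⟨u, c, hc⟩ : ∃ (u : V) (c : G.Walk u u), c.IsCycle := by
    simpa [IsAcyclic] using not_isAcyclic_of_even_ndeg heven hG
  set C := c.toSubgraph.spanningCoe
  have hCG : C ≤ G := c.toSubgraph.spanningCoe_le
  have hC : C.IsEulerianOrientation c.dartRel := hc.isEulerianOrientation_dartRel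
  have hdisj : Disjoint (G \ C) C := disjoint_sdiff_self_left
  have hlt : G \ C < G :=
    sdiff_lt hCG (ne_bot_iff_exists_adj.2 ⟨u, c.snd, c.toSubgraph_adj_snd hc.not_nil⟩)
  have heven' : ∀ x, Even (ndeg (G \ C) x) := fun x => by
    have := ndeg_sup_of_disjoint hdisj x
    rw [sdiff_sup_cancel hCG, hC.ndeg_eq_two_mul] at this
    have := heven x
    grind
  obtain ⟨D, hD⟩ := ih (G \ C) hlt heven'
  have := hD.sup hC hdisj
  rw [sdiff_sup_cancel hCG] at this
  exact ⟨_, this⟩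

end SimpleGraph

theorem petersen_even_factor_general {r k : ℕ} (hr : Even r) (hk : Even k)
    (hkr : k ≤ r) {V : Type*} [Fintype V]
    (G : SimpleGraph V) (hreg : ∀ v, ndeg G v = r) :
    ∃ F ≤ G, ∀ v, ndeg F v = k := by
  obtain ⟨s, rfl⟩ := hr
  obtain ⟨m, rfl⟩ := hk
  obtain ⟨D, hD⟩ := G.exists_isEulerianOrientation fun x => hreg x ▸ ⟨s, rfl⟩
  have hout : ∀ x, {y | D x y}.ncard = s := fun x => by
    have := hD.ndeg_eq_two_mul x
    rw [hreg] at this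
    omega
  have hin : ∀ x, {y | D y x}.ncard = s := fun x => hD.ncard_out_eq_ncard_in x ▸ hout x
  obtain ⟨T, hTD, hTout, hTin⟩ := exists_regular_le_of_regular (by omega : m ≤ s) hout hin
  refine ⟨SimpleGraph.fromRel T, hD.fromRel_le hTD, fun x => ?_⟩
  rw [(hD.fromRel_of_le hTD).ndeg_eq, hTout, hTin]

/-- **Petersen's theorem.** If `r` and `k` are even with `1 ≤ k ≤ r`, then every
`r`-regular graph has a `k`-factor. -/
theorem petersen_even_factor {r k : ℕ} (hr : Even r) (hk : Even k)
    (hk1 : 1 ≤ k) (hkr : k ≤ r) {V : Type*} [Fintype V]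
    (G : SimpleGraph V) (hreg : ∀ v, ndeg G v = r) :
    ∃ F ≤ G, ∀ v, ndeg F v = k :=
  petersen_even_factor_general hr hk hkr G hreg
end

section
/- Let 1 ≤ k ≤ r-1. Then every r-regular graph has a {k, k+1}-factor, i.e., a spanning subgraph in which every vertex has degree k or k+1. -/
open Finset

lemma Set.Subsingleton.ncard_le_one {α : Type*} {s : Set α} (h : s.Subsingleton) :
    s.ncard ≤ 1 :=
  (Set.ncard_le_one h.finite).2 h

namespace SimpleGraph

variable {V : Type*} {H : SimpleGraph V}

/-- Hall's condition holds because every vertex of `A` has the maximum degree `d`, so a set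
`s ⊆ A` sends `d * #s` edges into its neighbourhood, which can absorb at most `d` per vertex. -/
lemma exists_injective_adj_of_ndeg_le {A : Set V} {d : ℕ} (hd : 0 < d)
    (hfin : ∀ v, (H.neighborSet v).Finite) (hA : ∀ a ∈ A, ndeg H a = d)
    (hle : ∀ v, ndeg H v ≤ d) :
    ∃ f : A → V, Function.Injective f ∧ ∀ a : A, H.Adj a (f a) := by
  classical
  let N : A → Finset V := fun a => (hfin a).toFinset
  have hall : ∀ s : Finset A, #s ≤ #(s.biUnion N) := by
    intro s
    refine Nat.le_of_mul_le_mul_right (card_mul_le_card_mul (fun (a : A) w => H.Adj a w)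
      (m := d) (n := d) (fun a ha => ?_) (fun w _ => ?_)) hd
    · calc d = #(N a) := by rw [← hA a a.2, ndeg, Set.ncard_eq_toFinset_card _ (hfin a)]
        _ ≤ _ := card_le_card fun w hw => mem_filter.2
          ⟨mem_biUnion.2 ⟨a, ha, hw⟩, by simpa [N] using hw⟩
    · calc #(s.bipartiteBelow (fun (a : A) w => H.Adj a w) w) ≤ #(hfin w).toFinset :=
            card_le_card_of_injOn Subtype.val
              (fun a ha => by simpa [adj_comm] using (mem_filter.1 ha).2)
              Subtype.val_injective.injOn
        _ ≤ d := by rw [← Set.ncard_eq_toFinset_card _ (hfin w)]; exact hle w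
  obtain ⟨f, hinj, hf⟩ := (all_card_le_biUnion_card_iff_exists_injective N).mp hall
  exact ⟨f, hinj, fun a => by simpa [N] using hf a⟩

lemma ndeg_deleteEdges_add_ncard {s : Set (Sym2 V)} (hs : s ⊆ H.edgeSet) {v : V}
    (hv : (H.neighborSet v).Finite) :
    ndeg (H.deleteEdges s) v + {w | s(v, w) ∈ s}.ncard = ndeg H v := by
  have hsub : {w | s(v, w) ∈ s} ⊆ H.neighborSet v := fun w hw => hs hw
  have : (H.deleteEdges s).neighborSet v = H.neighborSet v \ {w | s(v, w) ∈ s} := by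
    ext w; simp only [mem_neighborSet, deleteEdges_adj, Set.mem_sdiff, Set.mem_ofPred_eq]
  rw [ndeg, this, ndeg, Set.ncard_sdiff_add_ncard_of_subset hsub hv]

section ChoiceEdges

variable {A : Set V} {f : A → V}

def choiceEdges (f : A → V) : Set (Sym2 V) := Set.range fun a : A => s(↑a, f a)

lemma setOf_mem_choiceEdges (v : V) :
    {w | s(v, w) ∈ choiceEdges f} =
      {w | ∃ h : v ∈ A, f ⟨v, h⟩ = w} ∪ {w | ∃ h : w ∈ A, f ⟨w, h⟩ = v} := by
  ext w
  simp only [choiceEdges, Set.mem_range, Sym2.eq_iff, Subtype.exists, Set.mem_ofPred_eq,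
    Set.mem_union]
  grind

lemma subsingleton_setOf_apply_eq (v : V) :
    {w | ∃ h : v ∈ A, f ⟨v, h⟩ = w}.Subsingleton := by
  rintro _ ⟨_, rfl⟩ _ ⟨_, rfl⟩
  rfl

lemma subsingleton_setOf_preimage (hf : Function.Injective f) (v : V) :
    {w | ∃ h : w ∈ A, f ⟨w, h⟩ = v}.Subsingleton := by
  rintro _ ⟨_, h₁⟩ _ ⟨_, h₂⟩
  exact congrArg Subtype.val (hf (h₁.trans h₂.symm))

lemma finite_setOf_mem_choiceEdges (hf : Function.Injective f) (v : V) :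
    {w | s(v, w) ∈ choiceEdges f}.Finite := by
  rw [setOf_mem_choiceEdges]
  exact (subsingleton_setOf_apply_eq v).finite.union (subsingleton_setOf_preimage hf v).finite

lemma ncard_setOf_mem_choiceEdges_le_two (hf : Function.Injective f) (v : V) :
    {w | s(v, w) ∈ choiceEdges f}.ncard ≤ 2 := by
  rw [setOf_mem_choiceEdges]
  exact (Set.ncard_union_le _ _).trans (add_le_add (subsingleton_setOf_apply_eq v).ncard_le_one
    (subsingleton_setOf_preimage hf v).ncard_le_one)

lemma ncard_setOf_mem_choiceEdges_le_one (hf : Function.Injective f) {v : V} (hv : v ∉ A) :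
    {w | s(v, w) ∈ choiceEdges f}.ncard ≤ 1 := by
  rw [setOf_mem_choiceEdges]
  simpa [hv] using (subsingleton_setOf_preimage hf v).ncard_le_one

lemma one_le_ncard_setOf_mem_choiceEdges (hf : Function.Injective f) {v : V} (hv : v ∈ A) :
    1 ≤ {w | s(v, w) ∈ choiceEdges f}.ncard :=
  (Set.ncard_pos (finite_setOf_mem_choiceEdges hf v)).2 ⟨f ⟨v, hv⟩, ⟨v, hv⟩, rfl⟩

end ChoiceEdges

theorem exists_le_forall_ndeg_eq_or_eq_succ_of_succ {j : ℕ}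
    (hH : ∀ v, ndeg H v = j + 1 ∨ ndeg H v = j + 2) :
    ∃ F ≤ H, ∀ v, ndeg F v = j ∨ ndeg F v = j + 1 := by
  have hfin (v : V) : (H.neighborSet v).Finite :=
    Set.finite_of_ncard_pos (by rcases hH v with h | h <;> rw [ndeg] at h <;> omega)
  let A : Set V := {v | ndeg H v = j + 2}
  obtain ⟨f, hf, hadj⟩ := exists_injective_adj_of_ndeg_le (A := A) (Nat.succ_pos _) hfin
    (fun _ ha => ha) (fun v => by rcases hH v with h | h <;> omega)
  have hE : choiceEdges f ⊆ H.edgeSet := by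
    rintro _ ⟨a, rfl⟩
    exact hadj a
  refine ⟨H.deleteEdges (choiceEdges f), H.deleteEdges_le _, fun v => ?_⟩
  have hdel := ndeg_deleteEdges_add_ncard hE (hfin v)
  have hle_two := ncard_setOf_mem_choiceEdges_le_two hf v
  by_cases hv : v ∈ A
  · have hv' : ndeg H v = j + 2 := hv
    have := one_le_ncard_setOf_mem_choiceEdges hf hv
    omega
  · have hv' : ndeg H v ≠ j + 2 := hv
    have := ncard_setOf_mem_choiceEdges_le_one hf hv
    have := hH v
    omega

theorem exists_le_forall_ndeg_eq_or_eq_succ_of_forall_ndeg_eq {G : SimpleGraph V} {r k : ℕ}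
    (hreg : ∀ v, ndeg G v = r) (hkr : k ≤ r) :
    ∃ F ≤ G, ∀ v, ndeg F v = k ∨ ndeg F v = k + 1 := by
  induction hkr using Nat.decreasingInduction with
  | self => exact ⟨G, le_rfl, fun v => .inl (hreg v)⟩
  | of_succ k _ ih =>
    obtain ⟨F, hFG, hF⟩ := ih
    obtain ⟨F', hF'F, hF'⟩ := exists_le_forall_ndeg_eq_or_eq_succ_of_succ hF
    exact ⟨F', hF'F.trans hFG, hF'⟩

end SimpleGraph

theorem tutte_k_k1_factor_general {r k : ℕ} (hkr : k ≤ r - 1)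
    {V : Type*}
    (G : SimpleGraph V) (hreg : ∀ v, ndeg G v = r) :
    ∃ F ≤ G, ∀ v, ndeg F v = k ∨ ndeg F v = k + 1 :=
  SimpleGraph.exists_le_forall_ndeg_eq_or_eq_succ_of_forall_ndeg_eq hreg (by omega)

/-- **Tutte's theorem.** If `1 ≤ k ≤ r - 1`, then every `r`-regular graph has a
`{k, k+1}`-factor. -/
theorem tutte_k_k1_factor {r k : ℕ} (hk1 : 1 ≤ k) (hkr : k ≤ r - 1)
    {V : Type*} [Fintype V]
    (G : SimpleGraph V) (hreg : ∀ v, ndeg G v = r) :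
    ∃ F ≤ G, ∀ v, ndeg F v = k ∨ ndeg F v = k + 1 :=
  tutte_k_k1_factor_general hkr G hreg
end

section
/- Let 1 ≤ k ≤ r-1. Then every {r, r+1}-graph has a {k, k+1}-factor. -/
open Finset

namespace SimpleGraph

variable {V : Type*}

/-- `G` is a `{k, k+1}`-graph. -/
def IsAlmostRegularOfDegree (G : SimpleGraph V) (k : ℕ) : Prop :=
  ∀ v, ndeg G v = k ∨ ndeg G v = k + 1

theorem ndeg_sdiff_add_ndeg {G K : SimpleGraph V} (hK : K ≤ G) {v : V}
    (hv : (G.neighborSet v).Finite) : ndeg (G \ K) v + ndeg K v = ndeg G v := by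
  rw [ndeg, neighborSet_sdiff]
  exact Set.ncard_sdiff_add_ncard_of_subset (neighborSet_mono hK v) hv

theorem ndeg_fromRel_le (M : V → V → Prop) (v : V) (hout : {u | M v u}.Finite)
    (hin : {u | M u v}.Finite) :
    ndeg (fromRel M) v ≤ {u | M v u}.ncard + {u | M u v}.ncard := by
  have hsub : (fromRel M).neighborSet v ⊆ {u | M v u} ∪ {u | M u v} :=
    fun u hu => ((fromRel_adj M v u).1 hu).2
  exact (Set.ncard_le_ncard hsub (hout.union hin)).trans (Set.ncard_union_le _ _)

/-- Hall's condition holds by double counting the edges between a set of degree-`d` vertices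
and its neighbourhood, where all degrees are at most `d`. -/
theorem exists_injective_adj_of_ndeg_le_s3 (G : SimpleGraph V)
    (hfin : ∀ v, (G.neighborSet v).Finite) {d : ℕ} (hd : 0 < d) (hle : ∀ v, ndeg G v ≤ d) :
    ∃ f : {v // ndeg G v = d} → V,
      Function.Injective f ∧ ∀ x : {v // ndeg G v = d}, G.Adj x (f x) := by
  classical
  have hcard : ∀ v, #(hfin v).toFinset = ndeg G v :=
    fun v => (Set.ncard_eq_toFinset_card _ (hfin v)).symm
  obtain ⟨f, hinj, hf⟩ := (all_card_le_biUnion_card_iff_exists_injective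
    fun x : {v // ndeg G v = d} => (hfin x).toFinset).1 fun s => by
      refine Nat.le_of_mul_le_mul_right
        (card_mul_le_card_mul (fun (x : {v // ndeg G v = d}) v => G.Adj x v) ?_ ?_) hd
      · intro x hx
        refine (x.2.symm.trans (hcard x).symm).trans_le (card_le_card fun u hu => ?_)
        exact (mem_bipartiteAbove _).2
          ⟨mem_biUnion.2 ⟨x, hx, hu⟩, (hfin x).mem_toFinset.1 hu⟩
      · intro v _
        refine (card_le_card_of_injOn Subtype.val (fun x hx => ?_)
          Subtype.val_injective.injOn).trans ((hcard v).trans_le (hle v))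
        exact (hfin v).mem_toFinset.2 (G.adj_symm ((mem_bipartiteBelow _).1 hx).2)
  exact ⟨f, hinj, fun x => (hfin x).mem_toFinset.1 (hf x)⟩

theorem IsAlmostRegularOfDegree.exists_le_of_succ {G : SimpleGraph V} {r : ℕ}
    (hG : G.IsAlmostRegularOfDegree (r + 1)) : ∃ H ≤ G, H.IsAlmostRegularOfDegree r := by
  have hfin : ∀ v, (G.neighborSet v).Finite :=
    fun v => Set.finite_of_ncard_pos (by rcases hG v with h | h <;> rw [ndeg] at h <;> omega)
  obtain ⟨f, hinj, hadj⟩ := G.exists_injective_adj_of_ndeg_le_s3 hfin (d := r + 2) (by omega)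
    fun v => by rcases hG v with h | h <;> omega
  set M : V → V → Prop := fun u w => ∃ h : ndeg G u = r + 2, f ⟨u, h⟩ = w
  have hM : fromRel M ≤ G := by
    rintro u w ⟨-, ⟨h, rfl⟩ | ⟨h, rfl⟩⟩
    exacts [hadj ⟨_, h⟩, (hadj ⟨_, h⟩).symm]
  refine ⟨G \ fromRel M, sdiff_le, fun v => ?_⟩
  have hsum := ndeg_sdiff_add_ndeg hM (hfin v)
  have hout : {u | M v u}.Subsingleton := by
    rintro _ ⟨_, rfl⟩ _ ⟨_, rfl⟩
    rfl
  have hin : {u | M u v}.Subsingleton := by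
    rintro _ ⟨_, hu⟩ _ ⟨_, hw⟩
    exact congrArg Subtype.val (hinj (hu.trans hw.symm))
  have hle := ndeg_fromRel_le M v hout.finite hin.finite
  have hout_card := (Set.ncard_le_one hout.finite).2 hout
  have hin_card := (Set.ncard_le_one hin.finite).2 hin
  by_cases hv : ndeg G v = r + 2
  · have hpos : 0 < ndeg (fromRel M) v := by
      refine (Set.ncard_pos (hfin v |>.subset (neighborSet_mono hM v))).2 ⟨f ⟨v, hv⟩, ?_⟩
      exact (fromRel_adj M v _).2 ⟨(hadj ⟨v, hv⟩).ne, Or.inl ⟨hv, rfl⟩⟩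
    omega
  · have hout_empty : {u | M v u} = ∅ := Set.eq_empty_of_forall_notMem fun _ ⟨h, _⟩ => hv h
    rw [hout_empty, Set.ncard_empty] at hle
    rcases hG v with h | h <;> omega

theorem IsAlmostRegularOfDegree.exists_le_of_le {G : SimpleGraph V} {k m : ℕ}
    (hG : G.IsAlmostRegularOfDegree m) (hkm : k ≤ m) :
    ∃ F ≤ G, F.IsAlmostRegularOfDegree k := by
  induction m, hkm using Nat.le_induction generalizing G with
  | base => exact ⟨G, le_rfl, hG⟩
  | succ m _ ih =>
    obtain ⟨H, hHG, hH⟩ := hG.exists_le_of_succ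
    obtain ⟨F, hFH, hF⟩ := ih hH
    exact ⟨F, hFH.trans hHG, hF⟩

end SimpleGraph

theorem thomassen_k_k1_factor_general {r k : ℕ} (hkr : k ≤ r - 1)
    {V : Type*}
    (G : SimpleGraph V) (hdeg : ∀ v, ndeg G v = r ∨ ndeg G v = r + 1) :
    ∃ F ≤ G, ∀ v, ndeg F v = k ∨ ndeg F v = k + 1 :=
  SimpleGraph.IsAlmostRegularOfDegree.exists_le_of_le hdeg (by omega)

/-- **Thomassen's theorem.** If `1 ≤ k ≤ r - 1`, then every `{r, r+1}`-graph has
a `{k, k+1}`-factor. -/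
theorem thomassen_k_k1_factor {r k : ℕ} (hk1 : 1 ≤ k) (hkr : k ≤ r - 1)
    {V : Type*} [Fintype V]
    (G : SimpleGraph V) (hdeg : ∀ v, ndeg G v = r ∨ ndeg G v = r + 1) :
    ∃ F ≤ G, ∀ v, ndeg F v = k ∨ ndeg F v = k + 1 :=
  thomassen_k_k1_factor_general hkr G hdeg
end

section
/- Let G be a graph with a set function H : V(G) → 2^ℕ satisfying H(v) ⊆ {0, 1, ..., d_G(v)}. If |H(v)| > ⌈d_G(v)/2⌉ for all vertices v, then G has an H-factor. -/
open Finset SimpleGraph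

theorem exists_eq_some_of_forall_exists_eq_some {ι : Type*} [Finite ι] {χ : ι → Option ι}
    (h : ∀ j, ∃ i, χ i = some j) (i : ι) : ∃ j, χ i = some j := by
  choose g hg using h
  have hg_inj : g.Injective := fun j j' hjj' => Option.some_injective _ (by rw [← hg, ← hg, hjj'])
  obtain ⟨j, rfl⟩ := Finite.injective_iff_surjective.mp hg_inj i
  exact ⟨j, hg j⟩

namespace Finset

section Cube

variable {ι : Type*} [Fintype ι] [DecidableEq ι]

theorem sum_neg_one_pow_card_compl_mul_ite_subset (A : Finset ι) :
    ∑ T : Finset ι, (-1 : ℤ) ^ #Tᶜ * (if A ⊆ T then 1 else 0) = if A = univ then 1 else 0 := by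
  calc ∑ T : Finset ι, (-1 : ℤ) ^ #Tᶜ * (if A ⊆ T then 1 else 0)
      = ∑ U : Finset ι, (-1 : ℤ) ^ #U * (if U ⊆ Aᶜ then 1 else 0) :=
        Fintype.sum_bijective compl compl_involutive.bijective _ _ fun T => by
          simp only [compl_subset_compl]
    _ = ∑ U ∈ Aᶜ.powerset, (-1 : ℤ) ^ #U := by
        simp only [mul_ite, mul_one, mul_zero, ← sum_filter, filter_subset_univ]
    _ = if A = univ then 1 else 0 := by simp [sum_powerset_neg_one_pow_card]

theorem sum_neg_one_pow_card_compl_mul_prod_card_inter_sub_pos (a : ι → Finset ι)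
    (ha : ∀ i, i ∈ a i) (k : ι → ℤ) :
    0 < ∑ T : Finset ι, (-1 : ℤ) ^ #Tᶜ * ∏ i, ((#(T ∩ a i) : ℤ) - k i) := by
  -- Expand `∏ i, (∑ j ∈ a i, [j ∈ T] - k i)` over choice functions `χ`, where `χ i = none`
  -- picks the constant `-k i` and `χ i = some j` picks the term `[j ∈ T]`.
  set X := Fintype.piFinset fun i => insertNone (a i)
  let w : ι → Option ι → ℤ := fun i o => o.elim (-k i) fun _ => 1
  let support : (ι → Option ι) → Finset ι := fun χ => univ.biUnion fun i => (χ i).toFinset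
  have expand : ∀ T, ∏ i, ((#(T ∩ a i) : ℤ) - k i) =
      ∑ χ ∈ X, (∏ i, w i (χ i)) * if support χ ⊆ T then 1 else 0 := by
    intro T
    have factor : ∀ i, (#(T ∩ a i) : ℤ) - k i =
        ∑ o ∈ insertNone (a i), w i o * if o.toFinset ⊆ T then 1 else 0 := by
      intro i
      simp [w, inter_comm T]
      ring
    simp_rw [factor, prod_univ_sum, prod_mul_distrib, prod_boole, support, biUnion_subset]
    simp [X]
  have weight_eq_one : ∀ χ, support χ = univ → ∏ i, w i (χ i) = 1 := by
    intro χ hχ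
    refine prod_eq_one fun i _ => ?_
    obtain ⟨j, hj⟩ := exists_eq_some_of_forall_exists_eq_some (fun j => by
      simpa [support] using hχ.ge (mem_univ j)) i
    simp [w, hj]
  calc 0 < (#{χ ∈ X | support χ = univ} : ℤ) := by
        exact_mod_cast card_pos.2 ⟨some, by simp [X, ha, support, eq_univ_iff_forall]⟩
    _ = ∑ χ ∈ X, if support χ = univ then 1 else 0 := by rw [sum_boole]
    _ = ∑ χ ∈ X, (∏ i, w i (χ i)) *
          ∑ T : Finset ι, (-1 : ℤ) ^ #Tᶜ * if support χ ⊆ T then 1 else 0 := by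
          refine sum_congr rfl fun χ _ => ?_
          rw [sum_neg_one_pow_card_compl_mul_ite_subset]
          split_ifs with h
          · rw [weight_eq_one χ h, mul_one]
          · rw [mul_zero]
    _ = _ := by
          simp_rw [expand, mul_sum]
          rw [sum_comm]
          exact sum_congr rfl fun _ _ => sum_congr rfl fun _ _ => by ring

theorem exists_card_inter_ne_of_mem_self (a : ι → Finset ι) (ha : ∀ i, i ∈ a i) (k : ι → ℤ) :
    ∃ T : Finset ι, ∀ i, (#(T ∩ a i) : ℤ) ≠ k i := by
  by_contra! h
  have vanish : ∀ T : Finset ι, ∏ i, ((#(T ∩ a i) : ℤ) - k i) = 0 := fun T => by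
    obtain ⟨i, hi⟩ := h T
    exact prod_eq_zero (mem_univ i) (by rw [hi, sub_self])
  have := sum_neg_one_pow_card_compl_mul_prod_card_inter_sub_pos a ha k
  simp only [vanish, mul_zero, sum_const_zero, lt_self_iff_false] at this

end Cube

theorem exists_card_inter_ne_of_injective {κ E : Type*} [Finite κ] [DecidableEq E]
    (t : κ → Finset E) {f : κ → E} (hf : f.Injective) (hft : ∀ i, f i ∈ t i) (k : κ → ℕ) :
    ∃ T : Finset E, ∀ i, #(T ∩ t i) ≠ k i := by
  classical
  have := Fintype.ofFinite κ
  obtain ⟨T, hT⟩ := exists_card_inter_ne_of_mem_self (fun i => ({j | f j ∈ t i} : Finset κ))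
    (by simp [hft]) fun i => k i
  refine ⟨T.map ⟨f, hf⟩, fun i => ?_⟩
  have hmap : T.map ⟨f, hf⟩ ∩ t i = (T ∩ ({j | f j ∈ t i} : Finset κ)).map ⟨f, hf⟩ := by
    ext e
    simp only [mem_inter, mem_map, mem_filter, mem_univ, true_and, Function.Embedding.coeFn_mk]
    grind
  rw [hmap, card_map]
  exact_mod_cast hT i

theorem exists_injective_sigma_of_sum_card_le {α β : Type*} [DecidableEq β] {κ : α → Type*}
    [∀ a, Finite (κ a)] (t : α → Finset β)
    (h : ∀ W : Finset α, ∑ a ∈ W, Nat.card (κ a) ≤ #(W.biUnion t)) :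
    ∃ f : (Σ a, κ a) → β, f.Injective ∧ ∀ p, f p ∈ t p.1 := by
  classical
  have := fun a => Fintype.ofFinite (κ a)
  refine (all_card_le_biUnion_card_iff_exists_injective _).mp fun A => ?_
  calc #A ≤ #((A.image Sigma.fst).sigma fun _ => univ) :=
        card_le_card fun p hp => mem_sigma.2 ⟨mem_image_of_mem _ hp, mem_univ _⟩
    _ = ∑ a ∈ A.image Sigma.fst, Nat.card (κ a) := by simp [card_sigma]
    _ ≤ #((A.image Sigma.fst).biUnion t) := h _
    _ = #(A.biUnion fun p => t p.1) := by rw [image_biUnion]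

end Finset

theorem Set.two_mul_ncard_Iic_sdiff_le {s : Set ℕ} {d : ℕ} (hs : s ⊆ Set.Iic d)
    (hcard : (d + 1) / 2 < s.ncard) : 2 * (Set.Iic d \ s).ncard ≤ d := by
  rw [Set.ncard_sdiff' hs, Set.ncard_Iic_nat]
  omega

namespace SimpleGraph

variable {V : Type*} (G : SimpleGraph V) [Fintype V] [DecidableEq V] [DecidableRel G.Adj]

theorem sum_degree_le_two_mul_card_biUnion_incidenceFinset (W : Finset V) :
    ∑ v ∈ W, G.degree v ≤ 2 * #(W.biUnion fun v => G.incidenceFinset v) := by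
  set U := W.biUnion fun v => G.incidenceFinset v
  calc ∑ v ∈ W, G.degree v = ∑ v ∈ W, #(U.bipartiteAbove (fun v e => v ∈ e) v) := by
        refine sum_congr rfl fun v hv => ?_
        rw [← card_incidenceFinset_eq_degree]
        congr 1
        ext e
        simp only [U, bipartiteAbove, mem_filter, mem_biUnion, mem_incidenceFinset, incidenceSet]
        grind
    _ = ∑ e ∈ U, #(W.bipartiteBelow (fun v e => v ∈ e) e) :=
        sum_card_bipartiteAbove_eq_sum_card_bipartiteBelow _
    _ ≤ ∑ e ∈ U, 2 := sum_le_sum fun e _ => by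
        calc #(W.bipartiteBelow (fun v e => v ∈ e) e) ≤ #e.toFinset :=
              card_le_card fun v hv => Sym2.mem_toFinset.2 (mem_filter.1 hv).2
          _ ≤ 2 := by rw [Sym2.card_toFinset]; split_ifs <;> omega
    _ = 2 * #U := by rw [sum_const, smul_eq_mul, mul_comm]

theorem exists_injective_sigma_incidenceFinset {κ : V → Type*} [∀ v, Finite (κ v)]
    (hκ : ∀ v, 2 * Nat.card (κ v) ≤ G.degree v) :
    ∃ f : (Σ v, κ v) → Sym2 V, f.Injective ∧ ∀ p, f p ∈ G.incidenceFinset p.1 :=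
  exists_injective_sigma_of_sum_card_le (fun v => G.incidenceFinset v) fun W => by
    have hdeg := G.sum_degree_le_two_mul_card_biUnion_incidenceFinset W
    have hsum := sum_le_sum fun v (_ : v ∈ W) => hκ v
    rw [← mul_sum] at hsum
    omega

end SimpleGraph

section Degree

variable {V : Type*}

theorem ndeg_eq_degree (G : SimpleGraph V) (v : V) [Fintype (G.neighborSet v)] :
    ndeg G v = G.degree v := by
  rw [ndeg, ← card_neighborSet_eq_degree, Set.ncard_eq_toFinset_card', Set.toFinset_card]

theorem ndeg_eq_ncard_incidenceSet (G : SimpleGraph V) (v : V) :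
    ndeg G v = (G.incidenceSet v).ncard := by
  classical
  rw [ndeg, ← Nat.card_coe_set_eq, ← Nat.card_coe_set_eq]
  exact Nat.card_congr (G.incidenceSetEquivNeighborSet v).symm

theorem ndeg_mono [Finite V] {F G : SimpleGraph V} (h : F ≤ G) (v : V) : ndeg F v ≤ ndeg G v :=
  Set.ncard_le_ncard (fun _ hw => h hw) (Set.toFinite _)

theorem ndeg_fromEdgeSet_inf [Fintype V] [DecidableEq V] (G : SimpleGraph V) [DecidableRel G.Adj]
    (T : Finset (Sym2 V)) (v : V) :
    ndeg (fromEdgeSet ↑T ⊓ G) v = #(T ∩ G.incidenceFinset v) := by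
  rw [ndeg_eq_ncard_incidenceSet, ← Set.ncard_coe_finset]
  congr 1
  ext e
  simp only [incidenceSet, edgeSet_inf, edgeSet_fromEdgeSet, Set.mem_ofPred_eq, Set.mem_inter_iff,
    Set.mem_sdiff, Sym2.mem_diagSet, coe_inter, coe_incidenceFinset, mem_coe]
  have := G.not_isDiag_of_mem_edgeSet (e := e)
  tauto

end Degree

/-- **Shirazi–Verstraëte.** If `H(v) ⊆ {0, 1, …, d_G(v)}` and
`|H(v)| > ⌈d_G(v)/2⌉` for all vertices `v`, then `G` has an `H`-factor. -/
theorem shirazi_verstraete {V : Type*} [Fintype V] (G : SimpleGraph V)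
    (H : V → Set ℕ) (hH : ∀ v, H v ⊆ Set.Iic (ndeg G v))
    (hcard : ∀ v, (ndeg G v + 1) / 2 < (H v).ncard) :
    ∃ F ≤ G, ∀ v, ndeg F v ∈ H v := by
  classical
  let forbidden : V → Set ℕ := fun v => Set.Iic (ndeg G v) \ H v
  obtain ⟨f, hf, hfG⟩ := G.exists_injective_sigma_incidenceFinset (κ := fun v => forbidden v)
    fun v => by
      rw [Nat.card_coe_set_eq, ← ndeg_eq_degree]
      exact Set.two_mul_ncard_Iic_sdiff_le (hH v) (hcard v)
  obtain ⟨T, hT⟩ := exists_card_inter_ne_of_injective _ hf hfG fun p => p.2.1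
  refine ⟨fromEdgeSet ↑T ⊓ G, inf_le_right, fun v => ?_⟩
  by_contra hv
  exact hT ⟨v, _, ndeg_mono inf_le_right v, hv⟩ (ndeg_fromEdgeSet_inf G T v).symm
end

section
/- Let r be an even integer such that r/2 is even. Then every connected r-regular graph of even order has a spanning subgraph F in which every vertex has degree r/2 - 1 or r/2 + 1. -/
open Finset

namespace ZMod

lemma val_add_one_eq_mod {m : ℕ} [NeZero m] (i : ZMod m) : (i + 1).val = (i.val + 1) % m := by
  rw [← val_natCast, Nat.cast_add, natCast_zmod_val, Nat.cast_one]

theorem exists_bool_eq_add_one_iff {m : ℕ} [NeZero m] (S : Finset (ZMod m))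
    (hS : Even (m + #S)) : ∃ c : ZMod m → Bool, ∀ i, c (i + 1) = c i ↔ i ∈ S := by
  classical
  set P := S.image val
  -- `g j` counts the positions before `j`, those of `S` twice: its parity flips from `j` to
  -- `j + 1` unless `j ∈ S`, and `g m = m + #S` is even, so it can be read around the cycle.
  let g : ℕ → ℕ := fun j => ∑ l ∈ range j, if l ∈ P then 2 else 1
  have hg_succ (j : ℕ) : g (j + 1) = g j + if j ∈ P then 2 else 1 := sum_range_succ _ _
  have hg_m : g m = m + #S := by
    have hP : P ⊆ range m := fun l hl => by
      obtain ⟨x, -, rfl⟩ := mem_image.mp hl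
      exact mem_range.mpr x.val_lt
    calc g m = ∑ l ∈ range m, (1 + if l ∈ P then 1 else 0) := by
          refine sum_congr rfl fun l _ => ?_
          split_ifs <;> rfl
      _ = m + #S := by
          rw [sum_add_distrib, sum_boole, filter_mem_eq_inter, inter_eq_right.mpr hP,
            card_image_of_injective _ (val_injective m)]
          simp
  refine ⟨fun i => decide (Even (g i.val)), fun i => ?_⟩
  have hwrap : Even (g (i + 1).val) ↔ Even (g (i.val + 1)) := by
    rw [val_add_one_eq_mod]
    rcases (Nat.succ_le_of_lt i.val_lt).lt_or_eq with h | h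
    · rw [Nat.mod_eq_of_lt h]
    · rw [Nat.succ_eq_add_one] at h
      rw [h, Nat.mod_self, hg_m]
      simpa [g] using hS
  have hmem : i.val ∈ P ↔ i ∈ S := (val_injective m).mem_finset_image
  simp only [decide_eq_decide, hwrap, hg_succ, hmem]
  split_ifs with hi
  · simp [hi, Nat.even_add]
  · simp only [hi, iff_false, Nat.even_add_one]
    exact not_iff_self

end ZMod

namespace SimpleGraph

variable {V : Type*} {G : SimpleGraph V}

lemma ndeg_eq_degree (G : SimpleGraph V) (v : V) [Fintype (G.neighborSet v)] :
    ndeg G v = G.degree v := by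
  rw [ndeg, Set.ncard_eq_toFinset_card', Set.toFinset_card, card_neighborSet_eq_degree]

lemma ndeg_eq_ncard_incidenceSet (G : SimpleGraph V) (v : V) :
    ndeg G v = (G.incidenceSet v).ncard := by
  classical
  rw [ndeg, ← Nat.card_coe_set_eq, ← Nat.card_coe_set_eq]
  exact Nat.card_congr (G.incidenceSetEquivNeighborSet v).symm

namespace Walk

variable {u v x : V}

def IsLongestTrail (p : G.Walk u v) : Prop :=
  p.IsTrail ∧ ∀ (a b : V) (q : G.Walk a b), q.IsTrail → q.length ≤ p.length

lemma exists_isLongestTrail [Finite V] [Nonempty V] :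
    ∃ (u v : V) (p : G.Walk u v), p.IsLongestTrail := by
  classical
  have := Fintype.ofFinite V
  set L : Set ℕ := {n | ∃ (a b : V) (q : G.Walk a b), q.IsTrail ∧ q.length = n}
  have hbdd : BddAbove L := by
    refine ⟨Fintype.card (Sym2 V), ?_⟩
    rintro _ ⟨a, b, q, hq, rfl⟩
    rw [← q.length_edges]
    exact hq.edges_nodup.length_le_card
  obtain ⟨w⟩ := ‹Nonempty V›
  obtain ⟨a, b, p, hp, hlen⟩ := Nat.sSup_mem (s := L) ⟨0, w, w, nil, .nil, rfl⟩ hbdd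
  exact ⟨a, b, p, hp, fun c d q hq => hlen ▸ le_csSup hbdd ⟨c, d, q, hq, rfl⟩⟩

lemma IsLongestTrail.incidenceSet_subset {p : G.Walk u v} (hp : p.IsLongestTrail) :
    G.incidenceSet u ⊆ {e | e ∈ p.edges} := by
  rintro e ⟨he, hue⟩
  obtain ⟨w, rfl⟩ := Sym2.mem_iff_exists.mp hue
  by_contra hne
  have hcons : (cons (G.adj_symm he) p).IsTrail := by
    rw [isTrail_cons, Sym2.eq_swap]
    exact ⟨hp.1, hne⟩
  simpa using hp.2 _ _ _ hcons

lemma IsLongestTrail.rotate [DecidableEq V] {c : G.Walk v v} (hc : c.IsLongestTrail)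
    (h : u ∈ c.support) : (c.rotate u h).IsLongestTrail := by
  have hperm := (c.rotate_edges u h).perm
  refine ⟨?_, fun a b q hq => ?_⟩
  · rw [isTrail_def, hperm.nodup_iff]
    exact hc.1.edges_nodup
  · simpa only [← length_edges (c.rotate u h), hperm.length_eq, length_edges]
      using hc.2 a b q hq

lemma IsTrail.countP_mem_edges_eq_degree [Fintype V] [DecidableRel G.Adj] [DecidableEq V]
    {p : G.Walk u v} (hp : p.IsTrail) (h : G.incidenceSet x ⊆ {e | e ∈ p.edges}) :
    p.edges.countP (fun e => x ∈ e) = G.degree x := by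
  rw [← card_incidenceFinset_eq_degree, List.countP_eq_length_filter,
    ← List.toFinset_card_of_nodup (hp.edges_nodup.filter _)]
  congr 1
  ext e
  simp only [List.mem_toFinset, List.mem_filter, mem_incidenceFinset, decide_eq_true_eq]
  exact ⟨fun ⟨he, hx⟩ => ⟨p.edges_subset_edgeSet he, hx⟩, fun he => ⟨h he, he.2⟩⟩

lemma IsLongestTrail.eq_of_even_degree [Fintype V] [DecidableRel G.Adj] {p : G.Walk u v}
    (hp : p.IsLongestTrail) (h : Even (G.degree u)) : u = v := by
  classical
  rw [← hp.1.countP_mem_edges_eq_degree hp.incidenceSet_subset, hp.1.even_countP_edges_iff] at h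
  by_contra huv
  exact (h huv).1 rfl

lemma exists_mem_support_not_incidenceSet_subset (p : G.Walk u v) {a b : V} (q : G.Walk a b)
    (hb : b ∈ p.support) (ha : ¬G.incidenceSet a ⊆ {e | e ∈ p.edges}) :
    ∃ x ∈ p.support, ¬G.incidenceSet x ⊆ {e | e ∈ p.edges} := by
  induction q with
  | nil => exact ⟨_, hb, ha⟩
  | @cons a c _ hac q ih =>
    by_cases hap : a ∈ p.support
    · exact ⟨a, hap, ha⟩
    · refine ih hb fun hsub => hap ?_
      exact p.snd_mem_support_of_mem_edges (hsub ⟨hac.symm, Sym2.mem_mk_left c a⟩)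

lemma IsLongestTrail.isEulerian [DecidableEq V] (hG : G.Connected) {c : G.Walk u u}
    (hc : c.IsLongestTrail) : c.IsEulerian := by
  refine hc.1.isEulerian_of_forall_mem fun e he => ?_
  by_contra hne
  induction e using Sym2.ind with | _ a b => ?_
  obtain ⟨q⟩ := hG.preconnected a u
  obtain ⟨x, hx, hsub⟩ := exists_mem_support_not_incidenceSet_subset c q c.start_mem_support
    fun h => hne (h ⟨he, Sym2.mem_mk_left a b⟩)
  exact hsub fun e he => (c.rotate_edges x hx).mem_iff.mp ((hc.rotate hx).incidenceSet_subset he)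

lemma IsEulerian.length_ne_zero [DecidableEq V] {c : G.Walk u v} (hc : c.IsEulerian) {a b : V}
    (h : G.Adj a b) : c.length ≠ 0 := by
  rw [← length_edges]
  exact (List.length_pos_of_mem (hc.mem_edges_iff.mpr (G.mem_edgeSet.mpr h))).ne'

end Walk

theorem Connected.exists_isEulerian_of_even_degree [Fintype V] [DecidableEq V]
    [DecidableRel G.Adj] (hG : G.Connected) (heven : ∀ v, Even (G.degree v)) :
    ∃ (u : V) (c : G.Walk u u), c.IsEulerian := by
  have := hG.nonempty
  obtain ⟨u, v, p, hp⟩ := Walk.exists_isLongestTrail (G := G)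
  obtain rfl := hp.eq_of_even_degree (heven u)
  exact ⟨u, p, hp.isEulerian hG⟩

/-- Positions along the tour live in `ZMod m`, so that the step after the last one is the first. -/
structure CyclicEulerTour (G : SimpleGraph V) (m : ℕ) where
  dart : ZMod m → G.Dart
  snd_eq_fst_add_one : ∀ i, (dart i).snd = (dart (i + 1)).fst
  edge_injective : Function.Injective fun i => (dart i).edge
  range_edge : Set.range (fun i => (dart i).edge) = G.edgeSet

def Walk.IsEulerian.toCyclicEulerTour [DecidableEq V] {u : V} {c : G.Walk u u}
    (hc : c.IsEulerian) [NeZero c.length] : G.CyclicEulerTour c.length where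
  dart i := ⟨(c.getVert i.val, c.getVert (i.val + 1)), c.adj_getVert_succ i.val_lt⟩
  snd_eq_fst_add_one i := by
    change c.getVert (i.val + 1) = c.getVert (i + 1).val
    rw [ZMod.val_add_one_eq_mod]
    rcases (Nat.succ_le_of_lt i.val_lt).lt_or_eq with h | h
    · rw [Nat.mod_eq_of_lt h]
    · rw [← Nat.succ_eq_add_one, h, Nat.mod_self, Walk.getVert_length, Walk.getVert_zero]
  edge_injective i j hij := by
    have hi : i.val < c.edges.length := by simpa using i.val_lt
    have hj : j.val < c.edges.length := by simpa using j.val_lt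
    simp only [Dart.edge_mk, ← Walk.getElem_edges hi, ← Walk.getElem_edges hj] at hij
    exact ZMod.val_injective _ ((hc.isTrail.edges_nodup.getElem_inj_iff).mp hij)
  range_edge := by
    ext e
    simp only [Set.mem_range, Dart.edge_mk, ← hc.mem_edges_iff, List.mem_iff_getElem]
    constructor
    · rintro ⟨i, rfl⟩
      exact ⟨i.val, by simpa using i.val_lt, Walk.getElem_edges _⟩
    · rintro ⟨n, hn, rfl⟩
      have hn' : n < c.length := by simpa using hn
      exact ⟨n, by rw [Walk.getElem_edges, ZMod.val_cast_of_lt hn']⟩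

namespace CyclicEulerTour

variable {m : ℕ} (T : G.CyclicEulerTour m)

def factor (s : Set (ZMod m)) : SimpleGraph V :=
  fromEdgeSet ((fun i => (T.dart i).edge) '' s)

lemma factor_le (s : Set (ZMod m)) : T.factor s ≤ G := by
  rintro a b ⟨⟨i, -, hi⟩, -⟩
  rw [← mem_edgeSet, ← hi]
  exact (T.dart i).edge_mem

lemma edgeSet_factor (s : Set (ZMod m)) :
    (T.factor s).edgeSet = (fun i => (T.dart i).edge) '' s := by
  rw [factor, edgeSet_fromEdgeSet, sdiff_eq_left, Set.disjoint_left]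
  rintro _ ⟨i, -, rfl⟩
  exact G.not_isDiag_of_mem_edgeSet (T.dart i).edge_mem

lemma factor_univ : T.factor Set.univ = G := by
  rw [← edgeSet_inj, edgeSet_factor, Set.image_univ, T.range_edge]

lemma ndeg_factor [DecidableEq V] [NeZero m] (s : Set (ZMod m)) [DecidablePred (· ∈ s)] (v : V) :
    ndeg (T.factor s) v = #{i | i ∈ s ∧ v ∈ (T.dart i).edge} := by
  rw [ndeg_eq_ncard_incidenceSet, ← Set.ncard_coe_finset, ← T.edge_injective.injOn.ncard_image]
  congr 1
  ext e
  simp only [incidenceSet, edgeSet_factor, coe_filter, Set.mem_image, mem_univ, true_and]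
  constructor
  · rintro ⟨⟨i, hi, rfl⟩, hv⟩
    exact ⟨i, ⟨hi, hv⟩, rfl⟩
  · rintro ⟨i, ⟨hi, hv⟩, rfl⟩
    exact ⟨⟨i, hi, rfl⟩, hv⟩

variable [DecidableEq V] [NeZero m]

def departures (v : V) : Finset (ZMod m) := {i | (T.dart i).fst = v}

lemma card_filter_mem_edge (s : Set (ZMod m)) [DecidablePred (· ∈ s)] (v : V) :
    #{i | i ∈ s ∧ v ∈ (T.dart i).edge} =
      ∑ i ∈ T.departures v, ((if i ∈ s then 1 else 0) + if i - 1 ∈ s then 1 else 0) := by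
  let A : Finset (ZMod m) := {i | i ∈ s ∧ (T.dart i).fst = v}
  let B : Finset (ZMod m) := {i | i ∈ s ∧ (T.dart i).snd = v}
  have hsplit : ({i | i ∈ s ∧ v ∈ (T.dart i).edge} : Finset (ZMod m)) = A ∪ B := by
    ext i
    simp only [A, B, mem_filter, mem_univ, true_and, mem_union, Dart.edge, Sym2.mem_iff]
    grind
  have hdisj : Disjoint A B := by
    rw [disjoint_filter]
    rintro i - ⟨-, hfst⟩ ⟨-, hsnd⟩
    exact (T.dart i).adj.ne (hfst.trans hsnd.symm)
  have hB : #B = #{i ∈ T.departures v | i - 1 ∈ s} := by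
    refine card_nbij' (· + 1) (· - 1) ?_ ?_ ?_ ?_ <;> intro i <;>
      simp [B, departures, T.snd_eq_fst_add_one] <;> tauto
  have hA : A = {i ∈ T.departures v | i ∈ s} := by
    ext i
    simp [A, departures, and_comm]
  rw [hsplit, card_union_of_disjoint hdisj, hA, hB, sum_add_distrib, card_filter, card_filter]

lemma two_mul_card_departures (v : V) : 2 * #(T.departures v) = ndeg G v := by
  have h := T.ndeg_factor Set.univ v
  rw [T.factor_univ, T.card_filter_mem_edge] at h
  simp [h, mul_comm]

lemma card_eq_sum_card_departures [Fintype V] : m = ∑ v, #(T.departures v) := by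
  calc m = #(univ : Finset (ZMod m)) := (ZMod.card m).symm
    _ = ∑ v, #(T.departures v) := card_eq_sum_card_fiberwise fun i _ => mem_univ (T.dart i).fst

lemma ndeg_factor_eq_of_unique_repeat (c : ZMod m → Bool) {v : V} {a : ZMod m}
    (ha : a ∈ T.departures v) (hrep : ∀ i ∈ T.departures v, c i = c (i - 1) ↔ i = a) :
    ndeg (T.factor {i | c i}) v = #(T.departures v) - 1 ∨
      ndeg (T.factor {i | c i}) v = #(T.departures v) + 1 := by
  have hflip : ∀ i ∈ (T.departures v).erase a,
      ((if i ∈ {i | c i} then 1 else 0) + if i - 1 ∈ {i | c i} then 1 else 0) = 1 := by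
    intro i hi
    obtain ⟨hia, hi⟩ := mem_erase.mp hi
    have : c i ≠ c (i - 1) := by rwa [ne_eq, hrep i hi]
    simp only [Set.mem_ofPred_eq]
    split_ifs <;> simp_all
  have hrep_a : c a = c (a - 1) := (hrep a ha).mpr rfl
  rw [T.ndeg_factor, T.card_filter_mem_edge, ← add_sum_erase _ _ ha, sum_congr rfl hflip,
    sum_const, card_erase_of_mem ha, smul_eq_mul, mul_one]
  have hpos := card_pos.mpr ⟨a, ha⟩
  simp only [Set.mem_ofPred_eq, hrep_a]
  split_ifs <;> omega

theorem exists_factor [Fintype V] (T : G.CyclicEulerTour m) {k : ℕ} (hk : 0 < k)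
    (hdeg : ∀ v, ndeg G v = 2 * k) (hV : Even (Fintype.card V)) :
    ∃ F ≤ G, ∀ v, ndeg F v = k - 1 ∨ ndeg F v = k + 1 := by
  have hdep (v : V) : #(T.departures v) = k := by
    have := T.two_mul_card_departures v
    rw [hdeg] at this
    omega
  have hne (v : V) : (T.departures v).Nonempty := by
    rw [← card_pos, hdep]
    exact hk
  choose σ hσ using hne
  have hσfst (v : V) : (T.dart (σ v)).fst = v := by simpa [departures] using hσ v
  set S := univ.image fun v => σ v - 1
  have hS {v : V} {i : ZMod m} (hi : i ∈ T.departures v) : i - 1 ∈ S ↔ i = σ v := by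
    refine ⟨fun h => ?_, fun h => mem_image.mpr ⟨v, mem_univ v, by rw [h]⟩⟩
    obtain ⟨w, -, hw⟩ := mem_image.mp h
    rw [sub_left_inj] at hw
    rw [← hw, ← (mem_filter.mp hi).2, ← hw, hσfst]
  have hcardS : #S = Fintype.card V := by
    refine card_image_of_injective _ fun v w h => ?_
    rw [← hσfst v, ← hσfst w, sub_left_inj.mp h]
  have hm : m = Fintype.card V * k :=
    T.card_eq_sum_card_departures.trans (by simp [hdep, mul_comm])
  have hmS : m + #S = Fintype.card V * (k + 1) := by rw [hcardS, mul_add_one, ← hm]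
  obtain ⟨c, hc⟩ := ZMod.exists_bool_eq_add_one_iff S (hmS ▸ hV.mul_right (k + 1))
  refine ⟨T.factor {i | c i}, T.factor_le _, fun v => ?_⟩
  refine hdep v ▸ T.ndeg_factor_eq_of_unique_repeat c (hσ v) fun i hi => ?_
  rw [← hS hi]
  simpa using hc (i - 1)

end CyclicEulerTour

end SimpleGraph

theorem half_factor_general {r : ℕ} (hr : Even r)
    {V : Type*} [Fintype V]
    (G : SimpleGraph V) (hconn : G.Connected) (hreg : ∀ v, ndeg G v = r)
    (horder : Even (Fintype.card V)) :
    ∃ F ≤ G, ∀ v, ndeg F v = r / 2 - 1 ∨ ndeg F v = r / 2 + 1 := by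
  classical
  obtain ⟨k, rfl⟩ := hr
  obtain rfl | hk := k.eq_zero_or_pos
  -- `0 / 2 - 1 = 0` in `ℕ`, so `G` itself is a factor of the required kind.
  · exact ⟨G, le_rfl, fun v => Or.inl (by simp [hreg v])⟩
  have hdeg (v : V) : ndeg G v = 2 * k := by rw [hreg, two_mul]
  obtain ⟨u, c, hc⟩ := hconn.exists_isEulerian_of_even_degree fun v => by
    rw [← SimpleGraph.ndeg_eq_degree, hdeg]
    exact even_two_mul k
  obtain ⟨v⟩ := hconn.nonempty
  obtain ⟨w, hw⟩ := Set.nonempty_of_ncard_ne_zero (s := G.neighborSet v) <| by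
    rw [← ndeg, hdeg]
    omega
  have : NeZero c.length := ⟨hc.length_ne_zero hw⟩
  simpa [← two_mul] using hc.toCyclicEulerTour.exists_factor hk hdeg horder

/-- If `r` is even and `r/2` is even, then every connected `r`-regular graph of
even order has an `{r/2 - 1, r/2 + 1}`-factor. -/
theorem half_factor {r : ℕ} (hr : Even r) (hr2 : Even (r / 2))
    {V : Type*} [Fintype V]
    (G : SimpleGraph V) (hconn : G.Connected) (hreg : ∀ v, ndeg G v = r)
    (horder : Even (Fintype.card V)) :
    ∃ F ≤ G, ∀ v, ndeg F v = r / 2 - 1 ∨ ndeg F v = r / 2 + 1 :=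
  half_factor_general hr G hconn hreg horder
end

section
/- Let 1 ≤ k ≤ r-1, let G be an {r, r+1}-graph, and let U = {v ∈ V(G) : d_G(v) = r+1}. If U is an independent set, then G has a {k, k+1}-factor F such that d_F(u) = k+1 for every u ∈ U. -/
/-! The factor is obtained by lowering all degrees one step at a time. In a
`{s+1, s+2}`-graph `H` whose vertices in `U` have degree `s+2` it suffices to delete a set `D`
of edges meeting every vertex of degree `s+2`, with at most one edge of `D` at vertices of `U`
or of degree `s+1` and at most two elsewhere.

Such a `D` exists in any graph of maximum degree `Δ > 0` with vertex capacities `≥ 1`, as long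
as the degree-`Δ` vertices of capacity one are independent. Take a capped `D₀` covering as many
degree-`Δ` vertices as possible, and suppose it misses `x`. Repeatedly pivoting an edge `ya` of
the current set onto the uncovered vertex `z ~ y` keeps the set optimal, so `a` becomes the new
uncovered vertex. The set `R` of vertices reachable in this way consists of degree-`Δ` vertices
and is independent, and every vertex of its neighbourhood `B` is joined by an edge of `D₀` to a
vertex of `R \ {x}`, different vertices of `B` to different ones. Double counting the edges
between `R` and `B` then gives `|R| ≤ |B| < |R|`. -/

namespace RegularFactor

open Finset SimpleGraph

variable {V : Type*}

lemma ndeg_eq_degree (F : SimpleGraph V) (v : V) [Fintype (F.neighborSet v)] :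
    ndeg F v = F.degree v := by
  rw [ndeg, ← Nat.card_coe_set_eq, Nat.card_eq_fintype_card, card_neighborSet_eq_degree]

lemma ndeg_sdiff [Fintype V] {H K : SimpleGraph V} (h : K ≤ H) (v : V) :
    ndeg (H \ K) v = ndeg H v - ndeg K v := by
  have hset : (H \ K).neighborSet v = H.neighborSet v \ K.neighborSet v := by
    ext w
    simp
  have hsub : K.neighborSet v ⊆ H.neighborSet v := fun w hw => h hw
  rw [ndeg, ndeg, ndeg, hset, Set.ncard_sdiff hsub]

section EdgeFinset

variable [DecidableEq V]

def incidence (D : Finset (Sym2 V)) (v : V) : ℕ := #{e ∈ D | v ∈ e}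

section Incidence

variable {D D' : Finset (Sym2 V)} {e : Sym2 V} {v : V}

lemma incidence_pos_iff : 0 < incidence D v ↔ ∃ e ∈ D, v ∈ e := by
  simp [incidence, card_pos, Finset.Nonempty]

lemma notMem_of_incidence_eq_zero (h : incidence D v = 0) (he : e ∈ D) : v ∉ e :=
  fun hv => (incidence_pos_iff.2 ⟨e, he, hv⟩).ne' h

lemma incidence_mono (h : D ⊆ D') (v : V) : incidence D v ≤ incidence D' v :=
  card_le_card (filter_subset_filter _ h)

lemma incidence_insert (he : e ∉ D) (v : V) :
    incidence (insert e D) v = incidence D v + if v ∈ e then 1 else 0 := by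
  unfold incidence
  rw [filter_insert]
  split_ifs with hv
  · exact card_insert_of_notMem (by simp [he])
  · rfl

lemma incidence_erase (he : e ∈ D) (v : V) :
    incidence (D.erase e) v + (if v ∈ e then 1 else 0) = incidence D v := by
  unfold incidence
  rw [filter_erase]
  split_ifs with hv
  · exact card_erase_add_one (mem_filter.2 ⟨he, hv⟩)
  · rw [erase_eq_of_notMem (by simp [hv])]; rfl

lemma incidence_le_one_iff :
    incidence D v ≤ 1 ↔ ∀ e ∈ D, v ∈ e → ∀ f ∈ D, v ∈ f → e = f := by
  simp [incidence, card_le_one]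

end Incidence

/-- Turn the edge `ya` of `D` about `y` into the edge `zy`. -/
def pivot (D : Finset (Sym2 V)) (y a z : V) : Finset (Sym2 V) :=
  insert s(z, y) (D.erase s(y, a))

section Pivot

variable {D : Finset (Sym2 V)} {y a z v : V}

lemma incidence_pivot (hya : s(y, a) ∈ D) (hz : incidence D z = 0) (v : V) :
    incidence (pivot D y a z) v + (if v = y ∨ v = a then 1 else 0) =
      incidence D v + if v = z ∨ v = y then 1 else 0 := by
  have hzy : s(z, y) ∉ D.erase s(y, a) := fun h =>
    notMem_of_incidence_eq_zero hz (mem_of_mem_erase h) (Sym2.mem_mk_left z y)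
  rw [pivot, incidence_insert hzy, ← incidence_erase hya v]
  simp only [Sym2.mem_iff]
  split_ifs <;> omega

lemma incidence_pivot_self (hya : s(y, a) ∈ D) (hz : incidence D z = 0) :
    incidence (pivot D y a z) z = 1 := by
  have := incidence_pivot hya hz z
  have hzya := notMem_of_incidence_eq_zero hz hya
  simp only [Sym2.mem_iff, not_or] at hzya
  simp [hzya.1, hzya.2, hz] at this
  omega

lemma incidence_pivot_right (hya : s(y, a) ∈ D) (hz : incidence D z = 0) (hay : a ≠ y) :
    incidence (pivot D y a z) a + 1 = incidence D a := by
  have := incidence_pivot hya hz a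
  have haz : a ≠ z := fun h => notMem_of_incidence_eq_zero hz hya (h ▸ Sym2.mem_mk_right y a)
  simpa [hay, haz] using this

lemma incidence_pivot_of_ne (hya : s(y, a) ∈ D) (hz : incidence D z = 0) (hvz : v ≠ z)
    (hva : v ≠ a) : incidence (pivot D y a z) v = incidence D v := by
  have := incidence_pivot hya hz v
  by_cases hvy : v = y <;> simp_all

lemma incidence_pivot_le (hya : s(y, a) ∈ D) (hz : incidence D z = 0) (hvz : v ≠ z) :
    incidence (pivot D y a z) v ≤ incidence D v := by
  have := incidence_pivot hya hz v
  split_ifs at this with h₁ h₂ <;> first | omega | (exfalso; tauto)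

end Pivot

section Cover

variable (G : SimpleGraph V) (Δ : ℕ) (cap : V → ℕ)

def IsCapped (D : Finset (Sym2 V)) : Prop :=
  (D : Set (Sym2 V)) ⊆ G.edgeSet ∧ ∀ v, incidence D v ≤ cap v

lemma IsCapped.pivot {G cap} {D : Finset (Sym2 V)} {y a z : V} (hD : IsCapped G cap D)
    (hya : s(y, a) ∈ D) (hz : incidence D z = 0) (hzy : G.Adj z y) (hcap : 1 ≤ cap z) :
    IsCapped G cap (pivot D y a z) := by
  refine ⟨?_, fun v => ?_⟩
  · rw [RegularFactor.pivot, coe_insert]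
    exact Set.insert_subset hzy (subset_trans (by simp) hD.1)
  · by_cases hvz : v = z
    · rw [hvz, incidence_pivot_self hya hz]; exact hcap
    · exact (incidence_pivot_le hya hz hvz).trans (hD.2 v)

variable [Fintype V] [DecidableRel G.Adj]

def coveredMax (D : Finset (Sym2 V)) : Finset V :=
  {v | G.degree v = Δ ∧ 0 < incidence D v}

def IsMaxCover (D : Finset (Sym2 V)) : Prop :=
  IsCapped G cap D ∧ ∀ D', IsCapped G cap D' → #(coveredMax G Δ D') ≤ #(coveredMax G Δ D)

def IsDeficient (D : Finset (Sym2 V)) (z : V) : Prop :=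
  IsMaxCover G Δ cap D ∧ G.degree z = Δ ∧ incidence D z = 0

lemma exists_isMaxCover : ∃ D, IsMaxCover G Δ cap D := by
  classical
  obtain ⟨D, hD, hmax⟩ := exists_max_image {D ∈ G.edgeFinset.powerset | IsCapped G cap D}
    (fun D => #(coveredMax G Δ D))
    ⟨∅, mem_filter.2 ⟨empty_mem_powerset _, by simp [IsCapped, incidence]⟩⟩
  refine ⟨D, (mem_filter.1 hD).2, fun D' hD' => hmax D' (mem_filter.2 ⟨?_, hD'⟩)⟩
  exact mem_powerset.2 fun e he => mem_edgeFinset.2 (hD'.1 he)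

variable {G Δ cap}

lemma IsMaxCover.not_ssubset {D D' : Finset (Sym2 V)} (hD : IsMaxCover G Δ cap D)
    (hD' : IsCapped G cap D') : ¬ coveredMax G Δ D ⊂ coveredMax G Δ D' :=
  fun h => (card_lt_card h).not_ge (hD.2 D' hD')

lemma mem_coveredMax {D : Finset (Sym2 V)} {v : V} :
    v ∈ coveredMax G Δ D ↔ G.degree v = Δ ∧ 0 < incidence D v := by
  simp [coveredMax]

/-- Otherwise the edge `zb` could be added to `D`. -/
lemma IsDeficient.cap_le_incidence {D : Finset (Sym2 V)} {z b : V}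
    (hD : IsDeficient G Δ cap D z) (hcap : 1 ≤ cap z) (hzb : G.Adj z b) :
    cap b ≤ incidence D b := by
  obtain ⟨hmax, hzΔ, hz⟩ := hD
  by_contra! hb
  have hzb' : s(z, b) ∉ D := fun h => notMem_of_incidence_eq_zero hz h (Sym2.mem_mk_left z b)
  have hcapped : IsCapped G cap (insert s(z, b) D) := by
    refine ⟨?_, fun v => ?_⟩
    · rw [coe_insert]; exact Set.insert_subset hzb hmax.1.1
    · rw [incidence_insert hzb']
      have := hmax.1.2 v
      simp only [Sym2.mem_iff]
      split_ifs with h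
      · rcases h with rfl | rfl <;> omega
      · omega
  refine hmax.not_ssubset hcapped ((ssubset_iff_of_subset fun v hv => ?_).2 ⟨z, ?_, ?_⟩)
  · rw [mem_coveredMax] at hv ⊢
    exact ⟨hv.1, hv.2.trans_le (incidence_mono (subset_insert _ _) v)⟩
  · rw [mem_coveredMax, incidence_insert hzb', hz]; simpa using hzΔ
  · rw [mem_coveredMax, hz]; simp

/-- The pivot covers `z`, so by optimality it must uncover `a`. -/
lemma IsDeficient.pivot {D : Finset (Sym2 V)} {z y a : V} (hD : IsDeficient G Δ cap D z)
    (hcap : 1 ≤ cap z) (hzy : G.Adj z y) (hya : s(y, a) ∈ D) :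
    incidence D a = 1 ∧ IsDeficient G Δ cap (RegularFactor.pivot D y a z) a := by
  obtain ⟨hmax, hzΔ, hz⟩ := hD
  have hay : a ≠ y := (G.ne_of_adj (hmax.1.1 hya)).symm
  have haz : a ≠ z := fun h => notMem_of_incidence_eq_zero hz hya (h ▸ Sym2.mem_mk_right y a)
  have ha := incidence_pivot_right hya hz hay
  have hcapped := hmax.1.pivot hya hz hzy hcap
  have hz' : z ∈ coveredMax G Δ (RegularFactor.pivot D y a z) := by
    rw [mem_coveredMax, incidence_pivot_self hya hz]; exact ⟨hzΔ, one_pos⟩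
  have hzD : z ∉ coveredMax G Δ D := by rw [mem_coveredMax, hz]; simp
  have hsub : ∀ v ∈ coveredMax G Δ D, v ≠ a →
      v ∈ coveredMax G Δ (RegularFactor.pivot D y a z) := by
    intro v hv hva
    rw [mem_coveredMax] at hv ⊢
    by_cases hvz : v = z
    · exact ⟨hv.1, by rw [hvz, incidence_pivot_self hya hz]; exact one_pos⟩
    · exact ⟨hv.1, by rw [incidence_pivot_of_ne hya hz hvz hva]; exact hv.2⟩
  have haΔ : G.degree a = Δ ∧ incidence D a = 1 := by
    by_contra h
    refine hmax.not_ssubset hcapped ((ssubset_iff_of_subset fun v hv => ?_).2 ⟨z, hz', hzD⟩)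
    by_cases hva : v = a
    · subst hva
      rw [mem_coveredMax] at hv ⊢
      exact ⟨hv.1, by have := h ∘ And.intro hv.1; omega⟩
    · exact hsub v hv hva
  refine ⟨haΔ.2, ⟨hcapped, fun D' hD' => (hmax.2 D' hD').trans ?_⟩, haΔ.1, by omega⟩
  have : insert z (coveredMax G Δ D) ⊆
      insert a (coveredMax G Δ (RegularFactor.pivot D y a z)) := by
    intro v hv
    rw [mem_insert] at hv ⊢
    by_cases hva : v = a
    · exact .inl hva
    · rcases hv with rfl | hv
      · exact .inr hz'
      · exact .inr (hsub v hv hva)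
  have := card_le_card this
  rw [card_insert_of_notMem hzD] at this
  exact Nat.le_of_succ_le_succ (this.trans (card_insert_le _ _))

end Cover

section AltReach

variable {G : SimpleGraph V} {Δ : ℕ} {cap : V → ℕ}

variable (G) in
inductive AltReach (D₀ : Finset (Sym2 V)) (x : V) : Finset (Sym2 V) → V → Prop
  | refl : AltReach D₀ x D₀ x
  | pivot {D : Finset (Sym2 V)} {z : V} (y a : V) :
      AltReach D₀ x D z → G.Adj z y → s(y, a) ∈ D → AltReach D₀ x (pivot D y a z) a

variable (G) in
def AltReachable (D₀ : Finset (Sym2 V)) (x v : V) : Prop :=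
  ∃ D, AltReach G D₀ x D v

variable {D₀ D : Finset (Sym2 V)} {x z : V}

lemma AltReach.altReachable (h : AltReach G D₀ x D z) : AltReachable G D₀ x z := ⟨D, h⟩

lemma AltReach.exists_altReachable_mem {e : Sym2 V} (h : AltReach G D₀ x D z) (he₀ : e ∈ D₀)
    (he : e ∉ D) : ∃ v ∈ e, AltReachable G D₀ x v := by
  induction h with
  | refl => exact absurd he₀ he
  | @pivot D z y a hr hzy hya ih =>
    by_cases heD : e ∈ D
    · have : e = s(y, a) := by
        by_contra hne
        exact he (mem_insert_of_mem (mem_erase.2 ⟨hne, heD⟩))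
      exact ⟨a, this ▸ Sym2.mem_mk_right y a, (hr.pivot y a hzy hya).altReachable⟩
    · exact ih heD

lemma AltReachable.of_mem {z y a : V} (hz : AltReachable G D₀ x z) (hzy : G.Adj z y)
    (hy : ¬ AltReachable G D₀ x y) (hya : s(y, a) ∈ D₀) : AltReachable G D₀ x a := by
  obtain ⟨D, h⟩ := hz
  by_cases hyaD : s(y, a) ∈ D
  · exact (h.pivot y a hzy hyaD).altReachable
  · obtain ⟨v, hv, hvR⟩ := h.exists_altReachable_mem hya hyaD
    rcases Sym2.mem_iff.1 hv with rfl | rfl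
    · exact absurd hvR hy
    · exact hvR

variable [Fintype V] [DecidableRel G.Adj]

lemma AltReach.isDeficient (h₀ : IsDeficient G Δ cap D₀ x) (hcap : ∀ v, 1 ≤ cap v)
    (h : AltReach G D₀ x D z) : IsDeficient G Δ cap D z := by
  induction h with
  | refl => exact h₀
  | pivot y a _ hzy hya ih => exact (ih.pivot (hcap _) hzy hya).2

/-- Pivoting only changes the incidence at the two vertices `z` and `a`, which are reachable
and end up with incidence at most one. -/
lemma AltReach.incidence_ne (h₀ : IsDeficient G Δ cap D₀ x) (hcap : ∀ v, 1 ≤ cap v)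
    (h : AltReach G D₀ x D z) {v : V} (hv : incidence D v ≠ incidence D₀ v) :
    AltReachable G D₀ x v ∧ incidence D₀ v ≤ 1 ∧ incidence D v ≤ 1 := by
  induction h generalizing v with
  | refl => exact absurd rfl hv
  | @pivot D z y a hr hzy hya ih =>
    have hD := hr.isDeficient h₀ hcap
    obtain ⟨ha, -, -, ha'⟩ := hD.pivot (hcap z) hzy hya
    by_cases hvz : v = z
    · subst hvz
      refine ⟨hr.altReachable, ?_, (incidence_pivot_self hya hD.2.2).le⟩
      by_cases h' : incidence D v = incidence D₀ v
      · rw [← h', hD.2.2]; exact zero_le_one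
      · exact (ih h').2.1
    by_cases hva : v = a
    · subst hva
      refine ⟨(hr.pivot y v hzy hya).altReachable, ?_, by omega⟩
      by_cases h' : incidence D v = incidence D₀ v
      · omega
      · exact (ih h').2.1
    · rw [incidence_pivot_of_ne hya hD.2.2 hvz hva] at hv ⊢
      exact ih hv

lemma AltReach.incidence_le_one (h₀ : IsDeficient G Δ cap D₀ x) (hcap : ∀ v, 1 ≤ cap v)
    (h : AltReach G D₀ x D z) {v : V} (hv : AltReachable G D₀ x v) : incidence D v ≤ 1 := by
  have hv₀ : incidence D₀ v ≤ 1 := by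
    obtain ⟨Dv, hv⟩ := hv
    by_cases heq : incidence Dv v = incidence D₀ v
    · rw [← heq, (hv.isDeficient h₀ hcap).2.2]; exact zero_le_one
    · exact (hv.incidence_ne h₀ hcap heq).2.1
  by_cases heq : incidence D v = incidence D₀ v
  · rwa [heq]
  · exact (h.incidence_ne h₀ hcap heq).2.2

lemma AltReachable.degree_eq (h₀ : IsDeficient G Δ cap D₀ x) (hcap : ∀ v, 1 ≤ cap v)
    {v : V} (hv : AltReachable G D₀ x v) : G.degree v = Δ :=
  let ⟨_, h⟩ := hv
  (h.isDeficient h₀ hcap).2.1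

lemma AltReachable.not_adj (h₀ : IsDeficient G Δ cap D₀ x) (hcap : ∀ v, 1 ≤ cap v)
    (hW : G.IsIndepSet {v | G.degree v = Δ ∧ cap v = 1}) {z b : V}
    (hz : AltReachable G D₀ x z) (hb : AltReachable G D₀ x b) : ¬ G.Adj z b := by
  have hcap_le : ∀ z b, AltReachable G D₀ x z → AltReachable G D₀ x b → G.Adj z b →
      cap b ≤ 1 := by
    rintro z b ⟨D, h⟩ hb hzb
    exact ((h.isDeficient h₀ hcap).cap_le_incidence (hcap z) hzb).trans
      (h.incidence_le_one h₀ hcap hb)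
  intro hzb
  exact hW ⟨hz.degree_eq h₀ hcap, (hcap_le b z hb hz hzb.symm).antisymm (hcap z)⟩
    ⟨hb.degree_eq h₀ hcap, (hcap_le z b hz hb hzb).antisymm (hcap b)⟩ (G.ne_of_adj hzb) hzb

lemma AltReachable.incidence_pos_of_adj (h₀ : IsDeficient G Δ cap D₀ x)
    (hcap : ∀ v, 1 ≤ cap v) {z y : V} (hz : AltReachable G D₀ x z) (hzy : G.Adj z y)
    (hy : ¬ AltReachable G D₀ x y) : 0 < incidence D₀ y := by
  obtain ⟨D, h⟩ := hz
  have hsat := (h.isDeficient h₀ hcap).cap_le_incidence (hcap z) hzy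
  have heq : incidence D y = incidence D₀ y :=
    by_contra fun hne => hy (h.incidence_ne h₀ hcap hne).1
  have := hcap y
  omega

end AltReach

theorem exists_isCapped_forall_incidence_pos [Fintype V] (G : SimpleGraph V)
    [DecidableRel G.Adj] {Δ : ℕ} {cap : V → ℕ} (hΔ : 0 < Δ)
    (hdeg : ∀ v, G.degree v ≤ Δ) (hcap : ∀ v, 1 ≤ cap v)
    (hW : G.IsIndepSet {v | G.degree v = Δ ∧ cap v = 1}) :
    ∃ D, IsCapped G cap D ∧ ∀ v, G.degree v = Δ → 0 < incidence D v := by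
  classical
  obtain ⟨D₀, hD₀⟩ := exists_isMaxCover G Δ cap
  refine ⟨D₀, hD₀.1, fun x hx => Nat.pos_of_ne_zero fun hx₀ => ?_⟩
  have h₀ : IsDeficient G Δ cap D₀ x := ⟨hD₀, hx, hx₀⟩
  set R : Finset V := {v | AltReachable G D₀ x v}
  set B : Finset V := {y | ∃ z ∈ R, G.Adj z y}
  have hxR : x ∈ R := by simpa [R] using AltReach.refl.altReachable
  have hRB : #R * Δ ≤ #B * Δ := by
    refine card_mul_le_card_mul G.Adj (fun z hz => ?_) (fun y _ => ?_)
    · have hzR : AltReachable G D₀ x z := by simpa [R] using hz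
      rw [← hzR.degree_eq h₀ hcap, ← card_neighborFinset_eq_degree]
      refine card_le_card fun y hy => ?_
      rw [mem_neighborFinset] at hy
      exact (mem_bipartiteAbove G.Adj).2 ⟨by simpa [B] using ⟨z, hz, hy⟩, hy⟩
    · refine le_trans (card_le_card fun z hz => ?_) ((card_neighborFinset_eq_degree G y).trans_le
        (hdeg y))
      exact (mem_neighborFinset G y z).2 ((mem_bipartiteBelow G.Adj).1 hz).2.symm
  have hBR : #B ≤ #(R.erase x) := by
    refine card_le_card_of_forall_subsingleton (fun y a => s(y, a) ∈ D₀) (fun y hy => ?_) ?_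
    · obtain ⟨z, hz, hzy⟩ : ∃ z ∈ R, G.Adj z y := by simpa [B] using hy
      have hzR : AltReachable G D₀ x z := by simpa [R] using hz
      have hyR : ¬ AltReachable G D₀ x y := fun hyR => hzR.not_adj h₀ hcap hW hyR hzy
      obtain ⟨e, he, hye⟩ := incidence_pos_iff.1 (hzR.incidence_pos_of_adj h₀ hcap hzy hyR)
      obtain ⟨a, rfl⟩ := Sym2.mem_iff_exists.1 hye
      have hax : a ≠ x := fun hax =>
        notMem_of_incidence_eq_zero hx₀ he (hax ▸ Sym2.mem_mk_right y a)
      exact ⟨a, mem_erase.2 ⟨hax, by simpa [R] using hzR.of_mem hzy hyR he⟩, he⟩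
    · intro a ha y₁ ⟨_, h₁⟩ y₂ ⟨_, h₂⟩
      have haR : AltReachable G D₀ x a := by simpa [R] using mem_of_mem_erase ha
      have := incidence_le_one_iff.1 (AltReach.refl.incidence_le_one h₀ hcap haR)
      exact Sym2.congr_left.1 (this _ h₁ (Sym2.mem_mk_right _ _) _ h₂ (Sym2.mem_mk_right _ _))
  have := card_erase_lt_of_mem hxR
  have := Nat.le_of_mul_le_mul_right hRB hΔ
  omega

lemma ndeg_fromEdgeSet {G : SimpleGraph V} {D : Finset (Sym2 V)}
    (hD : (D : Set (Sym2 V)) ⊆ G.edgeSet) (v : V) :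
    ndeg (fromEdgeSet (D : Set (Sym2 V))) v = incidence D v := by
  rw [ndeg, ← Nat.card_coe_set_eq, ← Nat.card_congr (incidenceSetEquivNeighborSet _ v),
    Nat.card_coe_set_eq, incidence, ← Set.ncard_coe_finset]
  congr 1
  ext e
  simp only [incidenceSet, edgeSet_fromEdgeSet, coe_filter, Set.mem_ofPred_eq, Set.mem_sdiff,
    Sym2.mem_diagSet]
  exact ⟨fun h => ⟨h.1.1, h.2⟩,
    fun h => ⟨⟨h.1, G.not_isDiag_of_mem_edgeSet (hD h.1)⟩, h.2⟩⟩

end EdgeFinset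

def IsNearRegular (F : SimpleGraph V) (k : ℕ) (U : Set V) : Prop :=
  (∀ v, ndeg F v = k ∨ ndeg F v = k + 1) ∧ ∀ u ∈ U, ndeg F u = k + 1

variable [Fintype V] {U : Set V}

theorem IsNearRegular.exists_le_pred {H : SimpleGraph V} {s : ℕ}
    (hH : IsNearRegular H (s + 1) U) (hU : H.IsIndepSet U) : ∃ F ≤ H, IsNearRegular F s U := by
  classical
  let cap : V → ℕ := fun v => if v ∉ U ∧ ndeg H v = s + 2 then 2 else 1
  have hdeg : ∀ v, H.degree v = ndeg H v := fun v => (ndeg_eq_degree H v).symm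
  obtain ⟨D, ⟨hDH, hDcap⟩, hDpos⟩ :=
    exists_isCapped_forall_incidence_pos H (Δ := s + 2) (cap := cap) (Nat.succ_pos _)
      (fun v => by rw [hdeg]; rcases hH.1 v with h | h <;> omega)
      (fun v => by dsimp only [cap]; split_ifs <;> omega)
      (hU.mono fun v ⟨hv, hcv⟩ => by
        by_contra hvU
        rw [hdeg] at hv
        simp [cap, hvU, hv] at hcv)
  have hF : ∀ v, ndeg (H \ fromEdgeSet ↑D) v = ndeg H v - incidence D v := fun v => by
    rw [ndeg_sdiff ((fromEdgeSet_le H).2 (Set.sdiff_subset.trans hDH)), ndeg_fromEdgeSet hDH]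
  have hbounds : ∀ v, (ndeg H v = s + 2 → 0 < incidence D v) ∧ incidence D v ≤ cap v :=
    fun v => ⟨fun h => hDpos v (by rw [hdeg, h]), hDcap v⟩
  refine ⟨H \ fromEdgeSet ↑D, sdiff_le, fun v => ?_, fun u hu => ?_⟩
  · have := hbounds v
    rw [hF]
    rcases hH.1 v with h | h <;> dsimp only [cap] at this <;> split_ifs at this <;> omega
  · have := hbounds u
    have h := hH.2 u hu
    rw [hF]
    dsimp only [cap] at this
    rw [if_neg (by tauto)] at this
    omega

theorem IsNearRegular.exists_le_of_le {G : SimpleGraph V} {r k : ℕ} (hG : IsNearRegular G r U)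
    (hU : G.IsIndepSet U) (hkr : k ≤ r) : ∃ F ≤ G, IsNearRegular F k U := by
  refine Nat.decreasingInduction (motive := fun k _ => ∃ F ≤ G, IsNearRegular F k U)
    (fun s _ ⟨H, hHG, hH⟩ => ?_) ⟨G, le_rfl, hG⟩ hkr
  obtain ⟨F, hFH, hF⟩ := hH.exists_le_pred (hU.mono' fun _ _ h hadj => h (hHG hadj))
  exact ⟨F, hFH.trans hHG, hF⟩

end RegularFactor

theorem factor_with_U_general {r k : ℕ} (hkr : k ≤ r - 1)
    {V : Type*} [Fintype V]
    (G : SimpleGraph V) (hdeg : ∀ v, ndeg G v = r ∨ ndeg G v = r + 1)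
    (hU : ∀ u w, ndeg G u = r + 1 → ndeg G w = r + 1 → ¬ G.Adj u w) :
    ∃ F ≤ G, (∀ v, ndeg F v = k ∨ ndeg F v = k + 1) ∧
      (∀ u, ndeg G u = r + 1 → ndeg F u = k + 1) := by
  have hG : RegularFactor.IsNearRegular G r {u | ndeg G u = r + 1} :=
    ⟨hdeg, fun _ hu => hu⟩
  exact hG.exists_le_of_le (fun u hu w hw _ => hU u w hu hw) (show k ≤ r by omega)

/-- **Key lemma.** Let `1 ≤ k ≤ r - 1`, let `G` be an `{r, r+1}`-graph, and let
`U` be the set of vertices of degree `r + 1`. If `U` is independent, then `G`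
has a `{k, k+1}`-factor `F` with `d_F(u) = k + 1` for every `u ∈ U`. -/
theorem factor_with_U {r k : ℕ} (hk1 : 1 ≤ k) (hkr : k ≤ r - 1)
    {V : Type*} [Fintype V]
    (G : SimpleGraph V) (hdeg : ∀ v, ndeg G v = r ∨ ndeg G v = r + 1)
    (hU : ∀ u w, ndeg G u = r + 1 → ndeg G w = r + 1 → ¬ G.Adj u w) :
    ∃ F ≤ G, (∀ v, ndeg F v = k ∨ ndeg F v = k + 1) ∧
      (∀ u, ndeg G u = r + 1 → ndeg F u = k + 1) :=
  factor_with_U_general hkr G hdeg hU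
end
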